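/- arXiv:1807.07030 — 3 statements merged into one kernel-verified Lean document; each statement's English description precedes it below -/
import Mathlib

section
/- Let G be a finite simple graph and B ⊆ V(G). Then the ⌊Z⌋ propagation time of B in G equals the minimum of the standard propagation times of B over all spanning supergraphs of G: pt_⌊Z⌋(G;B) = min{ pt_Z(H;B) : H is a spanning supergraph of G }. -/
open SimpleGraph

namespace ZFT

variable {V : Type*} {α : Type*} {β : Type*}

/-! ### Standard zero forcing (simultaneous propagation) -/

/-- One round of simultaneous standard zero forcing: a blue vertex forces its
unique white neighbor. -/
def zStep (G : SimpleGraph V) (S : Set V) : Set V :=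
  S ∪ {w | ∃ u ∈ S, G.Adj u w ∧ ∀ x, G.Adj u x → x ∉ S → x = w}

/-- `B` is a standard zero forcing set of `G`. -/
def IsZeroForcingSet (G : SimpleGraph V) (B : Set V) : Prop :=
  ∃ t : ℕ, (zStep G)^[t] B = Set.univ

/-- The standard propagation time `pt_Z(G;B)` (`⊤` if `B` is not a zero forcing set). -/
noncomputable def ptZ (G : SimpleGraph V) (B : Set V) : ℕ∞ :=
  sInf {n : ℕ∞ | ∃ t : ℕ, n = t ∧ (zStep G)^[t] B = Set.univ}

/-- The standard throttling number `th_Z(G;B) = |B| + pt_Z(G;B)`. -/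
noncomputable def thZ (G : SimpleGraph V) (B : Set V) : ℕ∞ :=
  (B.ncard : ℕ∞) + ptZ G B

/-- The standard throttling number `th_Z(G)`. -/
noncomputable def thZgraph (G : SimpleGraph V) : ℕ∞ :=
  sInf {n : ℕ∞ | ∃ B : Set V, IsZeroForcingSet G B ∧ n = thZ G B}

/-- The standard zero forcing number `Z(G)`. -/
noncomputable def Znum (G : SimpleGraph V) : ℕ :=
  sInf {k : ℕ | ∃ B : Set V, IsZeroForcingSet G B ∧ B.ncard = k}

/-- The standard propagation time `pt_Z(G)`, minimized over minimum zero forcing sets. -/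
noncomputable def ptZgraph (G : SimpleGraph V) : ℕ∞ :=
  sInf {n : ℕ∞ | ∃ B : Set V, IsZeroForcingSet G B ∧ B.ncard = Znum G ∧ n = ptZ G B}

/-! ### Sets of standard forces -/

/-- Validity of a single standard force `u → w` when `blue` is the blue set. -/
def zForceValid (G : SimpleGraph V) (blue : Set V) (u w : V) : Prop :=
  u ∈ blue ∧ w ∉ blue ∧ G.Adj u w ∧ ∀ x, G.Adj u x → x ∉ blue → x = w

/-- Validity of a chronological list of standard forces starting from a blue set. -/
def zValidList (G : SimpleGraph V) : Set V → List (V × V) → Prop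
  | _, [] => True
  | blue, p :: L => zForceValid G blue p.1 p.2 ∧ zValidList G (insert p.2 blue) L

/-- The blue set after performing all forces in a list, starting from `B`. -/
def endBlue (B : Set V) (L : List (V × V)) : Set V :=
  B ∪ {w | ∃ u, (u, w) ∈ L}

/-- The set of vertices that have performed a force in a list. -/
def endForced (L : List (V × V)) : Set V := {u | ∃ w, (u, w) ∈ L}

/-- `F` is a set of standard forces of `B` in `G` (recorded from a maximal
chronological list of forces). -/
def IsZForceSet (G : SimpleGraph V) (B : Set V) (F : Set (V × V)) : Prop :=
  ∃ L : List (V × V), zValidList G B L ∧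
    (∀ u w, ¬ zForceValid G (endBlue B L) u w) ∧ F = {p | p ∈ L}

/-- The set of blue vertices at time `t` when the forces of `F` are performed at the
earliest possible time steps, starting from `B` blue. -/
def zBlueAt (G : SimpleGraph V) (F : Set (V × V)) (B : Set V) : ℕ → Set V
  | 0 => B
  | t + 1 =>
      zBlueAt G F B t ∪ {w | ∃ v, (v, w) ∈ F ∧ zForceValid G (zBlueAt G F B t) v w}

/-- The standard propagation time `pt_Z(G;F)` of a set of forces `F` of `B`. -/
noncomputable def ptZofF (G : SimpleGraph V) (F : Set (V × V)) (B : Set V) : ℕ∞ :=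
  sInf {n : ℕ∞ | ∃ t : ℕ, n = t ∧ zBlueAt G F B t = Set.univ}

/-! ### `⌊Z⌋` (minor monotone floor) forcing -/

/-- Validity of a single `⌊Z⌋` force `u → w`: `u` is blue and has not yet forced, `w`
is white, and either `w` is the unique white neighbor of `u`, or all neighbors of `u`
are blue (a hop). -/
def zfForceValid (G : SimpleGraph V) (blue forced : Set V) (u w : V) : Prop :=
  u ∈ blue ∧ w ∉ blue ∧ u ∉ forced ∧
    ((G.Adj u w ∧ ∀ x, G.Adj u x → x ∉ blue → x = w) ∨ ∀ x, G.Adj u x → x ∈ blue)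

/-- Validity of a chronological list of `⌊Z⌋` forces. -/
def zfValidList (G : SimpleGraph V) : Set V → Set V → List (V × V) → Prop
  | _, _, [] => True
  | blue, forced, p :: L =>
      zfForceValid G blue forced p.1 p.2 ∧
        zfValidList G (insert p.2 blue) (insert p.1 forced) L

/-- `F` is a set of `⌊Z⌋` forces of `B` in `G` (recorded from a maximal chronological
list of `⌊Z⌋` forces starting with `B` blue). -/
def IsZFForceSet (G : SimpleGraph V) (B : Set V) (F : Set (V × V)) : Prop :=
  ∃ L : List (V × V), zfValidList G B ∅ L ∧
    (∀ u w, ¬ zfForceValid G (endBlue B L) (endForced L) u w) ∧ F = {p | p ∈ L}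

/-- The set of blue vertices at time `t` when the `⌊Z⌋` forces of `F` are performed at
the earliest possible time steps, starting from `B` blue. -/
def zfBlueAt (G : SimpleGraph V) (F : Set (V × V)) (B : Set V) : ℕ → Set V
  | 0 => B
  | t + 1 =>
      zfBlueAt G F B t ∪
        {w | ∃ v, (v, w) ∈ F ∧ v ∈ zfBlueAt G F B t ∧ w ∉ zfBlueAt G F B t ∧
          (∀ w', (v, w') ∈ F → w' ∈ zfBlueAt G F B t → w' ∈ B) ∧
          ((G.Adj v w ∧ ∀ x, G.Adj v x → x ∉ zfBlueAt G F B t → x = w) ∨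
            ∀ x, G.Adj v x → x ∈ zfBlueAt G F B t)}

/-- The `⌊Z⌋` propagation time `pt_⌊Z⌋(G;F)` of a set of `⌊Z⌋` forces `F` of `B`. -/
noncomputable def ptZFofF (G : SimpleGraph V) (F : Set (V × V)) (B : Set V) : ℕ∞ :=
  sInf {n : ℕ∞ | ∃ t : ℕ, n = t ∧ zfBlueAt G F B t = Set.univ}

/-- The `⌊Z⌋` propagation time `pt_⌊Z⌋(G;B)`, minimized over sets of `⌊Z⌋` forces of `B`. -/
noncomputable def ptZF (G : SimpleGraph V) (B : Set V) : ℕ∞ :=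
  sInf {n : ℕ∞ | ∃ F : Set (V × V), IsZFForceSet G B F ∧ n = ptZFofF G F B}

/-- The `⌊Z⌋` throttling number `th_⌊Z⌋(G;B) = |B| + pt_⌊Z⌋(G;B)`. -/
noncomputable def thZF (G : SimpleGraph V) (B : Set V) : ℕ∞ :=
  (B.ncard : ℕ∞) + ptZF G B

/-- The `⌊Z⌋` throttling number `th_⌊Z⌋(G)`, minimized over all `B ⊆ V(G)`. -/
noncomputable def thZFgraph (G : SimpleGraph V) : ℕ∞ :=
  sInf {n : ℕ∞ | ∃ B : Set V, n = thZF G B}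

/-- `B` is a `⌊Z⌋` forcing set of `G`. -/
def IsZFForcingSet (G : SimpleGraph V) (B : Set V) : Prop :=
  ∃ F : Set (V × V), IsZFForceSet G B F ∧ B ∪ {w | ∃ u, (u, w) ∈ F} = Set.univ

/-- The `⌊Z⌋` forcing number `⌊Z⌋(G)`. -/
noncomputable def ZFnum (G : SimpleGraph V) : ℕ :=
  sInf {k : ℕ | ∃ B : Set V, IsZFForcingSet G B ∧ B.ncard = k}

/-- The `⌊Z⌋` propagation time `pt_⌊Z⌋(G)`, minimized over minimum `⌊Z⌋` forcing sets. -/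
noncomputable def ptZFgraph (G : SimpleGraph V) : ℕ∞ :=
  sInf {n : ℕ∞ | ∃ B : Set V, IsZFForcingSet G B ∧ B.ncard = ZFnum G ∧ n = ptZF G B}

/-! ### Contractions, minors, and products -/

/-- The graph obtained from `H` by contracting (all) the edges in `C`: its vertices are
the connected components of the spanning subgraph of `H` with edge set `C ∩ E(H)`, and
two distinct components are adjacent iff `H` has an edge between them. -/
def contractEdges (H : SimpleGraph α) (C : Set (Sym2 α)) :
    SimpleGraph (SimpleGraph.fromEdgeSet C ⊓ H).ConnectedComponent where
  Adj c d := c ≠ d ∧ ∃ a b, H.Adj a b ∧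
      (SimpleGraph.fromEdgeSet C ⊓ H).connectedComponentMk a = c ∧
      (SimpleGraph.fromEdgeSet C ⊓ H).connectedComponentMk b = d
  symm := ⟨by
    rintro c d ⟨hcd, a, b, hab, ha, hb⟩
    exact ⟨hcd.symm, b, a, hab.symm, hb, ha⟩⟩
  loopless := ⟨fun c h => h.1 rfl⟩

/-- `G` is a minor of `H`: `G` is isomorphic to a subgraph of a graph obtained from an
induced subgraph of `H` by contracting a set of edges. -/
def IsMinor (G : SimpleGraph β) (H : SimpleGraph α) : Prop :=
  ∃ (s : Set α) (C : Set (Sym2 s))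
    (G'' : SimpleGraph (SimpleGraph.fromEdgeSet C ⊓ H.induce s).ConnectedComponent),
      G'' ≤ contractEdges (H.induce s) C ∧ Nonempty (G ≃g G'')

/-- The Cartesian product `K_a □ P_{b+1}`. -/
def prodKP (a b : ℕ) : SimpleGraph (Fin a × Fin (b + 1)) :=
  (⊤ : SimpleGraph (Fin a)) □ SimpleGraph.pathGraph (b + 1)

/-- The path edges of `K_a □ P_{b+1}` (edges within the copies of `P_{b+1}`). -/
def pathEdges (a b : ℕ) : Set (Sym2 (Fin a × Fin (b + 1))) :=
  {e | ∃ (i : Fin a) (j j' : Fin (b + 1)),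
    (SimpleGraph.pathGraph (b + 1)).Adj j j' ∧ e = s((i, j), (i, j'))}

/-- The complete edges of `K_a □ P_{b+1}` (edges within the copies of `K_a`). -/
def completeEdges (a b : ℕ) : Set (Sym2 (Fin a × Fin (b + 1))) :=
  {e | ∃ (i i' : Fin a) (j : Fin (b + 1)), i ≠ i' ∧ e = s((i, j), (i', j))}

/-- The star `K_{1,n-1}` on `n` vertices: vertex `0` is adjacent to all others. -/
def starGraph (n : ℕ) : SimpleGraph (Fin n) where
  Adj i j := i ≠ j ∧ ((i : ℕ) = 0 ∨ (j : ℕ) = 0)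
  symm := ⟨by rintro i j ⟨h1, h2⟩; exact ⟨h1.symm, h2.symm⟩⟩
  loopless := ⟨fun i h => h.1 rfl⟩

/-- The independence number `α(G)`. -/
noncomputable def indepNum (G : SimpleGraph V) : ℕ :=
  sSup {k : ℕ | ∃ s : Set V, (∀ a ∈ s, ∀ b ∈ s, a ≠ b → ¬ G.Adj a b) ∧ s.ncard = k}


/-!
A set of `⌊Z⌋` forces becomes a set of standard forces once every force `u → w` is added as an
edge `uw`: the new edges create no second white neighbour of a forcer `u`, because `u` forces
only `w` and the vertex that forces `u` turns blue before `u` does. Conversely, if the standard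
process of a spanning supergraph `H` colours everything, perform in `G` the forces of `H` in the
order in which their targets turn blue. The white `G`-neighbours of a forcer are among its white
`H`-neighbours, so each such force is a `⌊Z⌋` force (a hop when the target is not a
`G`-neighbour), and it is performed no later than in `H`.
-/

lemma exists_nodup_pairwise_le_of_finite {s : Set α} (hs : s.Finite) (f : α → ℕ) :
    ∃ l : List α, l.Nodup ∧ (∀ a, a ∈ l ↔ a ∈ s) ∧ l.Pairwise fun a b => f a ≤ f b := by
  refine ⟨hs.toFinset.toList.mergeSort fun a b => f a ≤ f b,
    (List.mergeSort_perm _ _).nodup_iff.2 (Finset.nodup_toList _), fun a => by simp, ?_⟩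
  simpa using List.pairwise_mergeSort (le := fun a b => decide (f a ≤ f b))
    (fun a b c hab hbc => by simp only [decide_eq_true_eq] at *; omega)
    (fun a b => by simpa using le_total _ _) _

section ForceLists

variable {G : SimpleGraph V} {B bl fo : Set V} {L : List (V × V)} {F : Set (V × V)}

lemma endBlue_cons (p : V × V) :
    endBlue bl (p :: L) = endBlue (insert p.2 bl) L := by
  ext x
  simp only [endBlue, List.mem_cons, Set.mem_union, Set.mem_insert_iff, Set.mem_ofPred_eq]
  grind

lemma endForced_cons (p : V × V) : endForced (p :: L) = insert p.1 (endForced L) := by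
  ext x
  simp only [endForced, List.mem_cons, Set.mem_insert_iff, Set.mem_ofPred_eq]
  grind

lemma zfValidList_of_forall_eq_append
    (h : ∀ L₁ p L₂, L = L₁ ++ p :: L₂ →
      zfForceValid G (endBlue bl L₁) (fo ∪ endForced L₁) p.1 p.2) :
    zfValidList G bl fo L := by
  induction L generalizing bl fo with
  | nil => trivial
  | cons p L ih =>
    refine ⟨by simpa [endBlue, endForced] using h [] p L rfl, ih fun L₁ q L₂ hL => ?_⟩
    have hq := h (p :: L₁) q L₂ (by rw [hL, List.cons_append])
    rwa [endBlue_cons, endForced_cons, Set.union_insert, ← Set.insert_union] at hq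

lemma zfValidList.fst_notMem (hL : zfValidList G bl fo L) {p : V × V} (hp : p ∈ L) :
    p.1 ∉ fo := by
  induction L generalizing bl fo with
  | nil => simp at hp
  | cons q L ih =>
    rcases List.mem_cons.1 hp with rfl | hp
    · exact hL.1.2.2.1
    · exact fun h => ih hL.2 hp (Set.mem_insert_of_mem _ h)

lemma zfValidList.snd_notMem (hL : zfValidList G bl fo L) {p : V × V} (hp : p ∈ L) :
    p.2 ∉ bl := by
  induction L generalizing bl fo with
  | nil => simp at hp
  | cons q L ih =>
    rcases List.mem_cons.1 hp with rfl | hp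
    · exact hL.1.2.1
    · exact fun h => ih hL.2 hp (Set.mem_insert_of_mem _ h)

lemma zfValidList.nodup_map_fst (hL : zfValidList G bl fo L) : (L.map Prod.fst).Nodup := by
  induction L generalizing bl fo with
  | nil => exact List.nodup_nil
  | cons q L ih =>
    refine List.nodup_cons.2 ⟨fun h => ?_, ih hL.2⟩
    obtain ⟨p, hp, hpq⟩ := List.mem_map.1 h
    exact hL.2.fst_notMem hp (hpq ▸ Set.mem_insert _ _)

lemma zfValidList.nodup_map_snd (hL : zfValidList G bl fo L) : (L.map Prod.snd).Nodup := by
  induction L generalizing bl fo with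
  | nil => exact List.nodup_nil
  | cons q L ih =>
    refine List.nodup_cons.2 ⟨fun h => ?_, ih hL.2⟩
    obtain ⟨p, hp, hpq⟩ := List.mem_map.1 h
    exact hL.2.snd_notMem hp (hpq ▸ Set.mem_insert _ _)

lemma IsZFForceSet.snd_notMem (hF : IsZFForceSet G B F) {p : V × V} (hp : p ∈ F) : p.2 ∉ B := by
  obtain ⟨L, hL, -, rfl⟩ := hF
  exact hL.snd_notMem hp

lemma IsZFForceSet.fst_injOn (hF : IsZFForceSet G B F) : Set.InjOn Prod.fst F := by
  obtain ⟨L, hL, -, rfl⟩ := hF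
  exact List.inj_on_of_nodup_map hL.nodup_map_fst

lemma IsZFForceSet.snd_injOn (hF : IsZFForceSet G B F) : Set.InjOn Prod.snd F := by
  obtain ⟨L, hL, -, rfl⟩ := hF
  exact List.inj_on_of_nodup_map hL.nodup_map_snd

end ForceLists

section ForcesAsEdges

variable {G : SimpleGraph V} {B : Set V} {F : Set (V × V)}

lemma fst_mem_zfBlueAt (hB : ∀ p ∈ F, p.2 ∉ B) (hsnd : Set.InjOn Prod.snd F) {p : V × V}
    (hp : p ∈ F) : ∀ {t : ℕ}, p.2 ∈ zfBlueAt G F B t → p.1 ∈ zfBlueAt G F B t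
  | 0, h => absurd h (hB p hp)
  | t + 1, h => by
    rcases h with h | ⟨v, hv, hvt, -⟩
    · exact Or.inl (fst_mem_zfBlueAt hB hsnd hp h)
    · have hvp : (v, p.2) = p := hsnd hv hp rfl
      exact Or.inl (hvp ▸ hvt)

lemma zfBlueAt_subset_zStep_iterate (hB : ∀ p ∈ F, p.2 ∉ B) (hfst : Set.InjOn Prod.fst F)
    (hsnd : Set.InjOn Prod.snd F) (t : ℕ) :
    zfBlueAt G F B t ⊆ (zStep (G ⊔ fromRel fun u w => (u, w) ∈ F))^[t] B := by
  induction t with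
  | zero => exact subset_rfl
  | succ t ih =>
    rw [Function.iterate_succ_apply']
    rintro w (hw | ⟨v, hvw, hv, hw, -, hrule⟩)
    · exact Or.inl (ih hw)
    refine Or.inr ⟨v, ih hv, Or.inr ((fromRel_adj _ _ _).2 ⟨ne_of_mem_of_not_mem hv hw,
      Or.inl hvw⟩), fun x hx hxt => ?_⟩
    have hx' : x ∉ zfBlueAt G F B t := fun h => hxt (ih h)
    rcases hx with hx | ⟨-, hx | hx⟩
    · rcases hrule with ⟨-, huniq⟩ | hall
      · exact huniq x hx hx'
      · exact absurd (hall x hx) hx'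
    · exact congrArg Prod.snd (hfst hx hvw rfl)
    · exact absurd (fst_mem_zfBlueAt hB hsnd hx hv) hx'

lemma ptZ_sup_fromRel_le_ptZFofF (hF : IsZFForceSet G B F) :
    ptZ (G ⊔ fromRel fun u w => (u, w) ∈ F) B ≤ ptZFofF G F B :=
  sInf_le_sInf fun _ ⟨t, hn, ht⟩ => ⟨t, hn, Set.eq_univ_of_univ_subset
    (ht ▸ zfBlueAt_subset_zStep_iterate (fun _ => hF.snd_notMem) hF.fst_injOn hF.snd_injOn t)⟩

end ForcesAsEdges

section ForcesOfSupergraph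

variable {G H : SimpleGraph V} {B : Set V}

lemma zStep_iterate_mono (H : SimpleGraph V) (B : Set V) : Monotone fun k => (zStep H)^[k] B :=
  monotone_nat_of_le_succ fun k => by
    rw [Function.iterate_succ_apply']
    exact Set.subset_union_left

lemma exists_zForceValid_of_mem_zStep {S : Set V} {w : V} (h : w ∈ zStep H S) (hw : w ∉ S) :
    ∃ u, zForceValid H S u w := by
  rcases h with h | ⟨u, hu, hadj, huniq⟩
  · exact absurd h hw
  · exact ⟨u, hu, hw, hadj, huniq⟩

lemma zForceValid.eq_of_subset {S₁ S₂ : Set V} {u w₁ w₂ : V} (h₁ : zForceValid H S₁ u w₁)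
    (h₂ : zForceValid H S₂ u w₂) (hS : S₁ ⊆ S₂) : w₂ = w₁ :=
  h₁.2.2.2 w₂ h₂.2.2.1 fun h => h₂.2.1 (hS h)

lemma zForceValid.zfForceValid_of_le {S blue forced : Set V} {u w : V}
    (h : zForceValid H S u w) (hGH : G ≤ H) (hS : S ⊆ blue) (hw : w ∉ blue)
    (hu : u ∉ forced) : zfForceValid G blue forced u w := by
  have huniq : ∀ x, G.Adj u x → x ∉ blue → x = w :=
    fun x hx hxb => h.2.2.2 x (hGH hx) fun hxS => hxb (hS hxS)
  refine ⟨hS h.1, hw, hu, ?_⟩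
  by_cases hadj : G.Adj u w
  · exact Or.inl ⟨hadj, huniq⟩
  · exact Or.inr fun x hx => by_contra fun hxb => hadj (huniq x hx hxb ▸ hx)

noncomputable def zTime (H : SimpleGraph V) (B : Set V) (w : V) : ℕ :=
  sInf {k | w ∈ (zStep H)^[k] B}

open Classical in
/-- A vertex forcing `w` in the standard process of `H` from `B` (junk value `w` if there is none,
as for `w ∈ B`). -/
noncomputable def zForcer (H : SimpleGraph V) (B : Set V) (w : V) : V :=
  if h : ∃ u, zForceValid H ((zStep H)^[zTime H B w - 1] B) u w then h.choose else w

lemma mem_zStep_iterate_iff_zTime_le (hB : IsZeroForcingSet H B) {w : V} {k : ℕ} :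
    w ∈ (zStep H)^[k] B ↔ zTime H B w ≤ k := by
  obtain ⟨t, ht⟩ := hB
  have hw : w ∈ (zStep H)^[t] B := ht ▸ Set.mem_univ w
  have hmin : w ∈ (zStep H)^[zTime H B w] B := Nat.sInf_mem (s := {k | w ∈ (zStep H)^[k] B}) ⟨t, hw⟩
  exact ⟨fun h => Nat.sInf_le h, fun h => zStep_iterate_mono H B h hmin⟩

lemma zTime_pos (hB : IsZeroForcingSet H B) {w : V} (hw : w ∉ B) : 0 < zTime H B w :=
  Nat.pos_of_ne_zero fun h => hw ((mem_zStep_iterate_iff_zTime_le hB (k := 0)).2 h.le)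

lemma zForceValid_zForcer (hB : IsZeroForcingSet H B) {w : V} (hw : w ∉ B) :
    zForceValid H ((zStep H)^[zTime H B w - 1] B) (zForcer H B w) w := by
  have hpos := zTime_pos hB hw
  have h : ∃ u, zForceValid H ((zStep H)^[zTime H B w - 1] B) u w := by
    refine exists_zForceValid_of_mem_zStep ?_ ?_
    · rw [← Function.iterate_succ_apply' (zStep H), Nat.succ_eq_add_one, Nat.sub_add_cancel hpos]
      exact (mem_zStep_iterate_iff_zTime_le hB).2 le_rfl
    · rw [mem_zStep_iterate_iff_zTime_le hB]
      omega
  rw [zForcer, dif_pos h]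
  exact h.choose_spec

lemma zForcer_injOn (hB : IsZeroForcingSet H B) : Set.InjOn (zForcer H B) Bᶜ := by
  suffices key : ∀ w₁ ∈ Bᶜ, ∀ w₂ ∈ Bᶜ, zTime H B w₁ ≤ zTime H B w₂ →
      zForcer H B w₁ = zForcer H B w₂ → w₂ = w₁ by
    intro w₁ h₁ w₂ h₂ he
    rcases le_total (zTime H B w₁) (zTime H B w₂) with h | h
    exacts [(key w₁ h₁ w₂ h₂ h he).symm, key w₂ h₂ w₁ h₁ h he.symm]
  intro w₁ h₁ w₂ h₂ hle he
  have hv₂ := zForceValid_zForcer hB h₂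
  rw [← he] at hv₂
  exact (zForceValid_zForcer hB h₁).eq_of_subset hv₂ (zStep_iterate_mono H B (by omega))

lemma zfValidList_map_zForcer (hGH : G ≤ H) (hB : IsZeroForcingSet H B) {M : List V}
    (hnd : M.Nodup) (hmem : ∀ w, w ∈ M ↔ w ∉ B)
    (hsort : M.Pairwise fun a b => zTime H B a ≤ zTime H B b) :
    zfValidList G B ∅ (M.map fun w => (zForcer H B w, w)) := by
  refine zfValidList_of_forall_eq_append fun L₁ p L₂ hL => ?_
  obtain ⟨M₁, M', rfl, rfl, hM'⟩ := List.map_eq_append_iff.1 hL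
  obtain ⟨w, M₂, rfl, rfl, -⟩ := List.map_eq_cons_iff.1 hM'
  have hwB : w ∉ B := (hmem w).1 (by simp)
  have hwM₁ : w ∉ M₁ := fun h => List.disjoint_of_nodup_append hnd h List.mem_cons_self
  have hblue : endBlue B (M₁.map fun w => (zForcer H B w, w)) = B ∪ {x | x ∈ M₁} := by
    ext x; simp [endBlue]
  have hforced : ∅ ∪ endForced (M₁.map fun w => (zForcer H B w, w)) =
      zForcer H B '' {x | x ∈ M₁} := by
    ext x; simp [endForced]
  rw [hblue, hforced]
  refine (zForceValid_zForcer hB hwB).zfForceValid_of_le hGH (fun x hx => ?_) ?_ ?_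
  · by_contra hxM
    have hxB : x ∉ B := fun h => hxM (Or.inl h)
    have hlt : zTime H B x < zTime H B w := by
      have := (mem_zStep_iterate_iff_zTime_le hB).1 hx
      have := zTime_pos hB hwB
      omega
    rcases List.mem_append.1 ((hmem x).2 hxB) with h | h
    · exact hxM (Or.inr h)
    rcases List.mem_cons.1 h with rfl | h
    · exact lt_irrefl _ hlt
    · exact (List.pairwise_cons.1 (List.pairwise_append.1 hsort).2.1).1 x h |>.not_gt hlt
  · rintro (h | h)
    exacts [hwB h, hwM₁ h]
  · rintro ⟨x, hx, hxw⟩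
    exact hwM₁ (zForcer_injOn hB ((hmem x).1 (List.mem_append_left _ hx)) hwB hxw ▸ hx)

lemma zStep_iterate_subset_zfBlueAt (hGH : G ≤ H) {F : Set (V × V)}
    (hF : ∀ k w, w ∈ (zStep H)^[k + 1] B → w ∉ (zStep H)^[k] B →
      ∃ v, zForceValid H ((zStep H)^[k] B) v w ∧ (v, w) ∈ F ∧ ∀ w', (v, w') ∈ F → w' = w) :
    ∀ k, (zStep H)^[k] B ⊆ zfBlueAt G F B k
  | 0 => subset_rfl
  | k + 1 => fun w hw => by
    have ih := zStep_iterate_subset_zfBlueAt hGH hF k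
    by_cases hwk : w ∈ zfBlueAt G F B k
    · exact Or.inl hwk
    obtain ⟨v, hv, hvw, hvF⟩ := hF k w hw fun h => hwk (ih h)
    have hzf := hv.zfForceValid_of_le hGH ih hwk (Set.notMem_empty v)
    exact Or.inr ⟨v, hvw, hzf.1, hwk, fun w' hw' hw'k => absurd (hvF w' hw' ▸ hw'k) hwk,
      hzf.2.2.2⟩

lemma ptZF_le_ptZ [Finite V] (hGH : G ≤ H) (B : Set V) : ptZF G B ≤ ptZ H B := by
  refine le_sInf ?_
  rintro _ ⟨t, rfl, ht⟩
  have hB : IsZeroForcingSet H B := ⟨t, ht⟩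
  obtain ⟨M, hnd, hmem, hsort⟩ := exists_nodup_pairwise_le_of_finite (Set.toFinite Bᶜ) (zTime H B)
  set L := M.map fun w => (zForcer H B w, w)
  have hF : IsZFForceSet G B {p | p ∈ L} := by
    refine ⟨L, zfValidList_map_zForcer hGH hB hnd hmem hsort, fun u w h => h.2.1 ?_, rfl⟩
    by_cases hwB : w ∈ B
    exacts [Or.inl hwB, Or.inr ⟨zForcer H B w, List.mem_map.2 ⟨w, (hmem w).2 hwB, rfl⟩⟩]
  have hfast := zStep_iterate_subset_zfBlueAt hGH (F := {p | p ∈ L}) (fun k w hw hwk => by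
    have hwB : w ∉ B := fun h => hwk (zStep_iterate_mono H B k.zero_le h)
    have htime : zTime H B w - 1 = k := by
      have := (mem_zStep_iterate_iff_zTime_le hB).1 hw
      have := (mem_zStep_iterate_iff_zTime_le hB).not.1 hwk
      omega
    refine ⟨zForcer H B w, htime ▸ zForceValid_zForcer hB hwB,
      List.mem_map.2 ⟨w, (hmem w).2 hwB, rfl⟩, fun w' hw' => ?_⟩
    obtain ⟨x, hx, hxw⟩ := List.mem_map.1 hw'
    obtain ⟨hfx, rfl⟩ := Prod.mk.inj hxw
    exact zForcer_injOn hB ((hmem x).1 hx) hwB hfx) t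
  calc ptZF G B ≤ ptZFofF G {p | p ∈ L} B := sInf_le ⟨_, hF, rfl⟩
    _ ≤ t := sInf_le ⟨t, rfl, Set.eq_univ_of_univ_subset (ht ▸ hfast)⟩

end ForcesOfSupergraph

/-- `pt_⌊Z⌋(G;B) = min{ pt_Z(H;B) : H a spanning supergraph of G }`. -/
theorem stmt0 {V : Type*} [Fintype V] (G : SimpleGraph V) (B : Set V) :
    ptZF G B = sInf {n : ℕ∞ | ∃ H : SimpleGraph V, G ≤ H ∧ n = ptZ H B} := by
  refine le_antisymm (le_sInf ?_) (le_sInf ?_)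
  · rintro _ ⟨H, hGH, rfl⟩
    exact ptZF_le_ptZ hGH B
  · rintro _ ⟨F, hF, rfl⟩
    refine (sInf_le ?_).trans (ptZ_sup_fromRel_le_ptZFofF hF)
    exact ⟨_, le_sup_left, rfl⟩

end ZFT
end

section
/- The ⌊Z⌋ throttling number is subgraph monotone: if G and H are finite simple graphs with G a subgraph of H (i.e., G embeds into H), then th_⌊Z⌋(G) ≤ th_⌊Z⌋(H). -/
open SimpleGraph

namespace ZFT

variable {V : Type*} {α : Type*} {β : Type*}

/-!
Let `B` colour `H` in time `T` along a list of forces. On each forcing chain of `H`, call the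
anchor of a vertex the last image vertex `f p` strictly before it. Whenever the chain reaches an
image vertex `f v` with anchor `f p`, let `p` force `v` in `G`: once `f p` has forced in `H`, all
its neighbours are blue, so `p` may hop to `v` (or force it directly if `f p` forced `f v`).
The new initial set consists of the image vertices without anchor, at most one per chain, hence
at most `|B|` of them, and every vertex `v` of `G` turns blue no later than `f v` does in `H`.
-/

open Function

section ValidLists

variable {X : SimpleGraph α}

/-- The neighbourhood clause of `zfForceValid` and `zfBlueAt`. -/
def ForcingCondition (X : SimpleGraph α) (blue : Set α) (u w : α) : Prop :=
  (X.Adj u w ∧ ∀ x, X.Adj u x → x ∉ blue → x = w) ∨ ∀ x, X.Adj u x → x ∈ blue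

theorem ForcingCondition.mem_insert {blue : Set α} {u w y : α}
    (h : ForcingCondition X blue u w) (hy : X.Adj u y) : y ∈ insert w blue := by
  rcases h with ⟨-, huniq⟩ | hall
  · by_cases hyb : y ∈ blue
    · exact Or.inr hyb
    · exact Or.inl (huniq y hy hyb)
  · exact Or.inr (hall y hy)

theorem ForcingCondition.comap {W : Type*} {G : SimpleGraph V} {H : SimpleGraph W}
    (f : G →g H) (hf : Injective f) {blueG : Set V} {blueH : Set W} {a v : V}
    (h : ForcingCondition H blueH (f a) (f v)) (hblue : ∀ x, f x ∈ blueH → x ∈ blueG) :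
    ForcingCondition G blueG a v := by
  by_cases hav : G.Adj a v
  · refine Or.inl ⟨hav, fun x hx hxb => hf ?_⟩
    rcases h with ⟨-, huniq⟩ | hall
    · exact huniq _ (f.map_adj hx) fun hb => hxb (hblue x hb)
    · exact absurd (hblue x (hall _ (f.map_adj hx))) hxb
  · refine Or.inr fun x hx => ?_
    rcases h with ⟨-, huniq⟩ | hall
    · by_contra hxb
      have hxv : x = v := hf (huniq _ (f.map_adj hx) fun hb => hxb (hblue x hb))
      exact hav (hxv ▸ hx)
    · exact hblue x (hall _ (f.map_adj hx))

@[simp]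
theorem endBlue_nil (b : Set α) : endBlue b [] = b := by
  simp [endBlue]

@[simp]
theorem endBlue_cons_s4 (b : Set α) (e : α × α) (L : List (α × α)) :
    endBlue b (e :: L) = endBlue (insert e.2 b) L := by
  ext x
  obtain ⟨u, w⟩ := e
  simp [endBlue, exists_or, eq_comm]
  tauto

theorem endBlue_append (b : Set α) (L₁ L₂ : List (α × α)) :
    endBlue b (L₁ ++ L₂) = endBlue (endBlue b L₁) L₂ := by
  ext x
  simp [endBlue, or_assoc, exists_or]

@[simp]
theorem endForced_nil : endForced ([] : List (α × α)) = ∅ := by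
  simp [endForced]

@[simp]
theorem endForced_cons_s4 (e : α × α) (L : List (α × α)) :
    endForced (e :: L) = insert e.1 (endForced L) := by
  ext x
  obtain ⟨u, w⟩ := e
  simp [endForced, exists_or, eq_comm]

theorem endForced_append (L₁ L₂ : List (α × α)) :
    endForced (L₁ ++ L₂) = endForced L₁ ∪ endForced L₂ := by
  ext x
  simp [endForced, exists_or]

theorem union_endForced_cons (fo : Set α) (e : α × α) (L : List (α × α)) :
    fo ∪ endForced (e :: L) = insert e.1 fo ∪ endForced L := by
  rw [endForced_cons_s4, Set.union_insert, Set.insert_union]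

theorem zfValidList.append {b fo : Set α} {L₁ L₂ : List (α × α)} (h₁ : zfValidList X b fo L₁)
    (h₂ : zfValidList X (endBlue b L₁) (fo ∪ endForced L₁) L₂) :
    zfValidList X b fo (L₁ ++ L₂) := by
  induction L₁ generalizing b fo with
  | nil => simpa using h₂
  | cons e L₁ ih =>
    rw [endBlue_cons_s4, union_endForced_cons] at h₂
    exact ⟨h₁.1, ih h₁.2 h₂⟩

theorem zfValidList.snd_notMem_s4 {b fo : Set α} {L : List (α × α)} (h : zfValidList X b fo L) :
    ∀ e ∈ L, e.2 ∉ b := by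
  induction L generalizing b fo with
  | nil => simp
  | cons e L ih =>
    intro e' he'
    rcases List.mem_cons.1 he' with rfl | he'
    · exact h.1.2.1
    · exact fun hb => ih h.2 e' he' (Set.mem_insert_of_mem _ hb)

theorem zfValidList.fst_notMem_s4 {b fo : Set α} {L : List (α × α)} (h : zfValidList X b fo L) :
    ∀ e ∈ L, e.1 ∉ fo := by
  induction L generalizing b fo with
  | nil => simp
  | cons e L ih =>
    intro e' he'
    rcases List.mem_cons.1 he' with rfl | he'
    · exact h.1.2.2.1
    · exact fun hfo => ih h.2 e' he' (Set.mem_insert_of_mem _ hfo)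

theorem zfValidList.eq_of_fst_eq {b fo : Set α} {L : List (α × α)} (h : zfValidList X b fo L)
    {e e' : α × α} (he : e ∈ L) (he' : e' ∈ L) (hfst : e.1 = e'.1) : e = e' := by
  induction L generalizing b fo with
  | nil => simp at he
  | cons d L ih =>
    have hd : ∀ e ∈ L, e.1 ≠ d.1 := fun e he hed => h.2.fst_notMem_s4 e he (hed ▸ Set.mem_insert _ _)
    rcases List.mem_cons.1 he with hed | he <;> rcases List.mem_cons.1 he' with hed' | he'
    · rw [hed, hed']
    · exact absurd (hed ▸ hfst).symm (hd e' he')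
    · exact absurd (hed' ▸ hfst) (hd e he)
    · exact ih h.2 he he'

theorem exists_maximal_zfValidList [Finite α] (X : SimpleGraph α) (b fo : Set α) :
    ∃ L, zfValidList X b fo L ∧ ∀ u w, ¬ zfForceValid X (endBlue b L) (fo ∪ endForced L) u w := by
  induction hn : bᶜ.ncard using Nat.strong_induction_on generalizing b fo with
  | _ n ih =>
    by_cases h : ∃ u w, zfForceValid X b fo u w
    · obtain ⟨u, w, huw⟩ := h
      have hlt : (insert w b)ᶜ.ncard < n :=
        hn ▸ Set.ncard_lt_ncard (compl_lt_compl_iff_lt.2 (Set.ssubset_insert huw.2.1))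
      obtain ⟨L, hL, hmax⟩ := ih _ hlt (insert w b) (insert u fo) rfl
      refine ⟨(u, w) :: L, ⟨huw, hL⟩, ?_⟩
      rwa [endBlue_cons_s4, union_endForced_cons]
    · push Not at h
      exact ⟨[], trivial, by simpa using h⟩

theorem exists_isZFForceSet_of_zfValidList [Finite α] {B : Set α} {L : List (α × α)}
    (hL : zfValidList X B ∅ L) :
    ∃ F, IsZFForceSet X B F ∧ (∀ e ∈ L, e ∈ F) ∧ ∀ u w w', (u, w) ∈ F → (u, w') ∈ F → w = w' := by
  obtain ⟨L₁, hL₁, hmax⟩ := exists_maximal_zfValidList X (endBlue B L) (∅ ∪ endForced L)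
  have hvalid : zfValidList X B ∅ (L ++ L₁) := hL.append hL₁
  refine ⟨{e | e ∈ L ++ L₁}, ⟨L ++ L₁, hvalid, ?_, rfl⟩, fun e he => List.mem_append_left _ he,
    fun u w w' hw hw' => congrArg Prod.snd (hvalid.eq_of_fst_eq hw hw' rfl)⟩
  rwa [endBlue_append, endForced_append, ← Set.empty_union (endForced L)]

end ValidLists

section BlueAt

variable {X : SimpleGraph α} {F : Set (α × α)} {B : Set α}

theorem zfBlueAt_mono {s t : ℕ} (h : s ≤ t) : zfBlueAt X F B s ⊆ zfBlueAt X F B t := by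
  induction h with
  | refl => exact subset_rfl
  | step _ ih => exact ih.trans Set.subset_union_left

theorem zfBlueAt_subset (t : ℕ) : zfBlueAt X F B t ⊆ B ∪ {w | ∃ v, (v, w) ∈ F} := by
  induction t with
  | zero => exact Set.subset_union_left
  | succ t ih =>
    rintro w (hw | ⟨v, hvw, -⟩)
    · exact ih hw
    · exact Or.inr ⟨v, hvw⟩

theorem exists_force_of_mem_zfBlueAt {t : ℕ} {w : α} (hw : w ∈ zfBlueAt X F B t) (hwB : w ∉ B) :
    ∃ s < t, ∃ v, (v, w) ∈ F ∧ v ∈ zfBlueAt X F B s ∧ w ∉ zfBlueAt X F B s ∧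
      ForcingCondition X (zfBlueAt X F B s) v w := by
  induction t with
  | zero => exact absurd hw hwB
  | succ t ih =>
    rcases hw with hw | ⟨v, hvw, hv, hw, -, hcond⟩
    · obtain ⟨s, hs, rest⟩ := ih hw
      exact ⟨s, hs.trans t.lt_succ_self, rest⟩
    · exact ⟨t, t.lt_succ_self, v, hvw, hv, hw, hcond⟩

theorem mem_zfBlueAt_succ {t : ℕ} {v w : α} (hF : ∀ w', (v, w') ∈ F → w' = w) (hvw : (v, w) ∈ F)
    (hv : v ∈ zfBlueAt X F B t) (hcond : ForcingCondition X (zfBlueAt X F B t) v w) :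
    w ∈ zfBlueAt X F B (t + 1) := by
  by_cases hw : w ∈ zfBlueAt X F B t
  · exact Or.inl hw
  · exact Or.inr ⟨v, hvw, hv, hw, fun w' hw' hb => absurd (hF w' hw' ▸ hb) hw, hcond⟩

theorem ptZF_le {T : ℕ} (hF : IsZFForceSet X B F) (hT : zfBlueAt X F B T = Set.univ) :
    ptZF X B ≤ T :=
  sInf_le_of_le ⟨F, hF, rfl⟩ (sInf_le ⟨T, rfl, hT⟩)

end BlueAt

section Anchors

variable {W : Type*} {f : V → W} {A : W → Option V} {X : SimpleGraph W}

theorem partialInv_eq_none (hf : Injective f) {u : W} :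
    partialInv f u = none ↔ u ∉ Set.range f := by
  simp only [Option.eq_none_iff_forall_ne_some, ne_eq, hf.isPartialInv _ u, Set.mem_range,
    not_exists]

theorem partialInv_or_eq_some (hf : Injective f) {u : W} {a : Option V} {p : V} :
    (partialInv f u).or a = some p ↔ f p = u ∨ (u ∉ Set.range f ∧ a = some p) := by
  rw [Option.or_eq_some_iff, hf.isPartialInv, partialInv_eq_none hf]

theorem partialInv_or_eq_none (hf : Injective f) {u : W} {a : Option V} :
    (partialInv f u).or a = none ↔ u ∉ Set.range f ∧ a = none := by
  rw [Option.or_eq_none_iff, partialInv_eq_none hf]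

open scoped Classical in
/-- Along a forcing chain, the anchor of `x` is the last image vertex strictly before `x`. -/
noncomputable def anchorStep (f : V → W) (A : W → Option V) (e : W × W) : W → Option V :=
  update A e.2 ((partialInv f e.1).or (A e.1))

theorem anchorStep_self (e : W × W) : anchorStep f A e e.2 = (partialInv f e.1).or (A e.1) := by
  simp [anchorStep]

theorem anchorStep_of_ne {e : W × W} {x : W} (h : x ≠ e.2) : anchorStep f A e x = A x := by
  simp [anchorStep, h]

noncomputable def anchors (f : V → W) (A : W → Option V) (L : List (W × W)) : W → Option V :=
  L.foldl (anchorStep f) A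

theorem anchors_of_forall_ne {L : List (W × W)} {x : W} (h : ∀ e ∈ L, e.2 ≠ x) :
    anchors f A L x = A x := by
  induction L generalizing A with
  | nil => rfl
  | cons e L ih =>
    rw [anchors, List.foldl_cons, ← anchors, ih fun e' he' => h e' (List.mem_cons_of_mem _ he'),
      anchorStep_of_ne (h e List.mem_cons_self).symm]

theorem anchors_eq_of_mem {b fo : Set W} {L : List (W × W)}
    (hL : zfValidList X b fo L) {u w : W} (h : (u, w) ∈ L) :
    anchors f A L w = (partialInv f u).or (anchors f A L u) := by
  induction L generalizing b fo A with
  | nil => simp at h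
  | cons e L ih =>
    rw [anchors, List.foldl_cons, ← anchors]
    rcases List.mem_cons.1 h with he | h
    · subst he
      have hw : ∀ e ∈ L, e.2 ≠ w := fun e he hew => hL.2.snd_notMem_s4 e he (hew ▸ Set.mem_insert _ _)
      have hu : ∀ e ∈ L, e.2 ≠ u := fun e he heu =>
        hL.2.snd_notMem_s4 e he (by rw [heu]; exact Set.mem_insert_of_mem _ hL.1.1)
      have huw : u ≠ w := fun huw => hL.1.2.1 (huw ▸ hL.1.1)
      rw [anchors_of_forall_ne hw, anchors_of_forall_ne hu, anchorStep_self, anchorStep_of_ne huw]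
    · exact ih hL.2 h

/-- The force of `G` read off a force `e` of `H` whose target is an image vertex: from the anchor
of the target to its preimage. -/
noncomputable def pulledForce (f : V → W) (A : W → Option V) (e : W × W) : Option (V × V) :=
  (partialInv f e.2).bind fun v => (A e.2).map fun p => (p, v)

theorem pulledForce_eq_some (hf : Injective f) {e : W × W} {p v : V} :
    pulledForce f A e = some (p, v) ↔ f v = e.2 ∧ A e.2 = some p := by
  simp only [pulledForce, Option.bind_eq_some_iff, Option.map_eq_some_iff, Prod.mk.injEq,
    hf.isPartialInv _ e.2]
  constructor
  · rintro ⟨v, hv, p, hp, rfl, rfl⟩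
    exact ⟨hv, hp⟩
  · rintro ⟨hv, hp⟩
    exact ⟨v, hv, p, hp, rfl, rfl⟩

/-- A vertex is *visible* if it is an image vertex or has not forced yet (it ends its chain).
The number of visible blue vertices without anchor never changes. -/
def unanchored (f : V → W) (S Fo : Set W) (A : W → Option V) : Set W :=
  {x ∈ S | A x = none ∧ (x ∈ Set.range f ∨ x ∉ Fo)}

theorem mem_unanchored {S Fo : Set W} {x : W} :
    x ∈ unanchored f S Fo A ↔ x ∈ S ∧ A x = none ∧ (x ∈ Set.range f ∨ x ∉ Fo) :=
  Iff.rfl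

theorem ncard_unanchored_anchorStep [Finite W] (hf : Injective f) {S Fo : Set W} {u w : W}
    (hu : u ∈ S) (hw : w ∉ S) (huFo : u ∉ Fo) (hwFo : w ∉ Fo) :
    (unanchored f (insert w S) (insert u Fo) (anchorStep f A (u, w))).ncard =
      (unanchored f S Fo A).ncard := by
  have huw : u ≠ w := fun h => hw (h ▸ hu)
  have hA : ∀ x, x ≠ w → anchorStep f A (u, w) x = A x := fun x hx => anchorStep_of_ne hx
  have hAw : anchorStep f A (u, w) w = (partialInv f u).or (A u) := anchorStep_self _
  by_cases hchain : u ∉ Set.range f ∧ A u = none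
  · have : unanchored f (insert w S) (insert u Fo) (anchorStep f A (u, w)) =
        insert w (unanchored f S Fo A \ {u}) := by
      ext x
      by_cases hxw : x = w
      · subst hxw
        simp only [mem_unanchored, hAw, partialInv_or_eq_none hf, Set.mem_insert_iff,
          Set.mem_sdiff, Set.mem_singleton_iff, huw.symm, hwFo]
        tauto
      · simp only [mem_unanchored, hA x hxw, Set.mem_insert_iff, Set.mem_sdiff,
          Set.mem_singleton_iff, hxw]
        rcases eq_or_ne x u with rfl | hxu <;> tauto
    rw [this, Set.ncard_insert_of_notMem (fun h => hw h.1.1),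
      Set.ncard_sdiff_singleton_add_one (mem_unanchored.2 ⟨hu, hchain.2, Or.inr huFo⟩)]
  · congr 1
    ext x
    by_cases hxw : x = w
    · subst hxw
      simp only [mem_unanchored, hAw, partialInv_or_eq_none hf, Set.mem_insert_iff, hw]
      tauto
    · simp only [mem_unanchored, hA x hxw, Set.mem_insert_iff, hxw]
      rcases eq_or_ne x u with rfl | hxu <;> tauto

theorem ncard_unanchored_anchors [Finite W] (hf : Injective f) {L : List (W × W)} {S Fo : Set W}
    (hL : zfValidList X S Fo L) (hFo : Fo ⊆ S) :
    (unanchored f (endBlue S L) (Fo ∪ endForced L) (anchors f A L)).ncard =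
      (unanchored f S Fo A).ncard := by
  induction L generalizing S Fo A with
  | nil => simp [anchors]
  | cons e L ih =>
    obtain ⟨⟨hu, hw, huFo, -⟩, hL⟩ := hL
    rw [endBlue_cons_s4, union_endForced_cons]
    have hFo' : insert e.1 Fo ⊆ insert e.2 S :=
      Set.insert_subset_iff.2 ⟨Set.mem_insert_of_mem _ hu, hFo.trans (Set.subset_insert _ _)⟩
    exact (ih hL hFo').trans (ncard_unanchored_anchorStep hf hu hw huFo fun h => hw (hFo h))

theorem ncard_preimage_unanchored_le [Finite W] (hf : Injective f) {B : Set W}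
    {L : List (W × W)} (hL : zfValidList X B ∅ L) (hcover : endBlue B L = Set.univ) :
    {v | anchors f (fun _ => none) L (f v) = none}.ncard ≤ B.ncard := by
  have hinit : unanchored f B ∅ (fun _ => none) = B := by
    ext x
    simp [mem_unanchored]
  calc {v | anchors f (fun _ => none) L (f v) = none}.ncard
      = (f '' {v | anchors f (fun _ => none) L (f v) = none}).ncard :=
        (Set.ncard_image_of_injective _ hf).symm
    _ ≤ (unanchored f (endBlue B L) (∅ ∪ endForced L) (anchors f (fun _ => none) L)).ncard :=
        Set.ncard_le_ncard (Set.image_subset_iff.2 fun v hv =>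
          mem_unanchored.2 ⟨hcover ▸ Set.mem_univ _, hv, Or.inl ⟨v, rfl⟩⟩)
    _ = B.ncard := by rw [ncard_unanchored_anchors hf hL (Set.empty_subset _), hinit]

end Anchors

section Pullback

variable {W : Type*} {G : SimpleGraph V} {H : SimpleGraph W}

/-- `S` is the current blue set of `H` and `Fo` the set of vertices that have already forced. -/
structure AnchorInv (H : SimpleGraph W) (f : V → W) (S Fo : Set W) (A : W → Option V) : Prop where
  forced_subset : Fo ⊆ S
  mem_of_anchor : ∀ x p, A x = some p → x ∈ S
  saturated : ∀ x p, A x = some p → f p ∈ Fo ∧ ∀ y, H.Adj (f p) y → y ∈ S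
  unique : ∀ x y p, A x = some p → A y = some p →
    (x ∈ Set.range f ∨ x ∉ Fo) → (y ∈ Set.range f ∨ y ∉ Fo) → x = y

theorem AnchorInv.init {f : V → W} (B : Set W) : AnchorInv H f B ∅ (fun _ => none) :=
  ⟨Set.empty_subset _, by simp, by simp, by simp⟩

theorem AnchorInv.step {f : V → W} (hf : Injective f) {S Fo : Set W} {A : W → Option V}
    {u w : W} (hI : AnchorInv H f S Fo A) (h : zfForceValid H S Fo u w) :
    AnchorInv H f (insert w S) (insert u Fo) (anchorStep f A (u, w)) := by
  obtain ⟨hu, hw, huFo, hcond⟩ := h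
  have hA : ∀ x, x ≠ w → anchorStep f A (u, w) x = A x := fun x hx => anchorStep_of_ne hx
  have hAw : ∀ p, anchorStep f A (u, w) w = some p ↔ f p = u ∨ (u ∉ Set.range f ∧ A u = some p) :=
    fun p => (anchorStep_self (u, w)).symm ▸ partialInv_or_eq_some hf
  have hvis : ∀ x, (x ∈ Set.range f ∨ x ∉ insert u Fo) → x ∈ Set.range f ∨ x ∉ Fo :=
    fun x hx => hx.imp_right (mt (Set.mem_insert_of_mem u))
  have hfresh : ∀ x p, x ≠ w → A x = some p → (x ∈ Set.range f ∨ x ∉ insert u Fo) →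
      anchorStep f A (u, w) w ≠ some p := by
    intro x p hxw hx hxvis hpw
    rcases (hAw p).1 hpw with rfl | ⟨huR, hup⟩
    · exact huFo (hI.saturated x _ hx).1
    · obtain rfl := hI.unique x u p hx hup (hvis x hxvis) (Or.inr huFo)
      exact hxvis.elim huR fun h => h (Set.mem_insert _ _)
  refine ⟨Set.insert_subset_iff.2 ⟨Set.mem_insert_of_mem _ hu,
    hI.forced_subset.trans (Set.subset_insert _ _)⟩, fun x p hx => ?_, fun x p hx => ?_,
    fun x y p hx hy hxvis hyvis => ?_⟩
  · by_cases hxw : x = w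
    · exact hxw ▸ Set.mem_insert _ _
    · exact Set.mem_insert_of_mem _ (hI.mem_of_anchor x p (hA x hxw ▸ hx))
  · have hsat : (f p ∈ Fo ∧ ∀ y, H.Adj (f p) y → y ∈ S) ∨ f p = u := by
      by_cases hxw : x = w
      · subst hxw
        rcases (hAw p).1 hx with hpu | ⟨-, hup⟩
        · exact Or.inr hpu
        · exact Or.inl (hI.saturated u p hup)
      · exact Or.inl (hI.saturated x p (hA x hxw ▸ hx))
    rcases hsat with ⟨hpFo, hpS⟩ | hpu
    · exact ⟨Set.mem_insert_of_mem _ hpFo, fun y hy => Set.mem_insert_of_mem _ (hpS y hy)⟩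
    · exact ⟨hpu ▸ Set.mem_insert _ _, fun y hy => ForcingCondition.mem_insert hcond (hpu ▸ hy)⟩
  · by_cases hxw : x = w <;> by_cases hyw : y = w
    · rw [hxw, hyw]
    · exact absurd (hxw ▸ hx) (hfresh y p hyw (hA y hyw ▸ hy) hyvis)
    · exact absurd (hyw ▸ hy) (hfresh x p hxw (hA x hxw ▸ hx) hxvis)
    · exact hI.unique x y p (hA x hxw ▸ hx) (hA y hyw ▸ hy) (hvis x hxvis) (hvis y hyvis)

theorem zfForceValid_of_anchorStep (f : G →g H) (hf : Injective f) {S Fo : Set W}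
    {A : W → Option V} {u w : W} {p v : V} {B' Φ : Set V} (hI : AnchorInv H f S Fo A)
    (hΦ : ∀ q ∈ Φ, ∃ x, A (f x) = some q) (h : zfForceValid H S Fo u w) (hv : f v = w)
    (hvB' : v ∉ B') (hp : anchorStep f A (u, w) w = some p) :
    zfForceValid G (B' ∪ f ⁻¹' S) Φ p v := by
  obtain ⟨hu, hw, huFo, hcond⟩ := h
  have hvS : v ∉ B' ∪ f ⁻¹' S := by
    rintro (h | h)
    exacts [hvB' h, hw (hv ▸ h)]
  rw [anchorStep_self, partialInv_or_eq_some hf] at hp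
  rcases hp with rfl | ⟨huR, hup⟩
  · refine ⟨Or.inr hu, hvS, fun hpΦ => ?_, ?_⟩
    · obtain ⟨x, hx⟩ := hΦ p hpΦ
      exact huFo (hI.saturated _ _ hx).1
    · exact ForcingCondition.comap f hf (hv ▸ hcond) fun x hx => Or.inr hx
  · obtain ⟨hpFo, hpS⟩ := hI.saturated u p hup
    refine ⟨Or.inr (hI.forced_subset hpFo), hvS, fun hpΦ => ?_,
      Or.inr fun x hx => Or.inr (hpS _ (f.map_adj hx))⟩
    obtain ⟨x, hx⟩ := hΦ p hpΦ
    exact huR ⟨x, hI.unique (f x) u p hx hup (Or.inl ⟨x, rfl⟩) (Or.inr huFo)⟩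

theorem zfValidList_filterMap_pulledForce (f : G →g H) (hf : Injective f) {L : List (W × W)}
    {S Fo : Set W} {A : W → Option V} {Φ : Set V} (hL : zfValidList H S Fo L)
    (hI : AnchorInv H f S Fo A) (hΦ : ∀ q ∈ Φ, ∃ x, A (f x) = some q) :
    zfValidList G ({v | anchors f A L (f v) = none} ∪ f ⁻¹' S) Φ
      (L.filterMap (pulledForce f (anchors f A L))) := by
  induction L generalizing S Fo A Φ with
  | nil => trivial
  | cons e L ih =>
    obtain ⟨u, w⟩ := e
    obtain ⟨hforce, hL⟩ := hL
    dsimp only at hforce hL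
    set A' := anchorStep f A (u, w)
    set C := {v | anchors f A' L (f v) = none}
    change zfValidList G (C ∪ f ⁻¹' S) Φ (((u, w) :: L).filterMap (pulledForce f (anchors f A' L)))
    have hfin : anchors f A' L w = A' w :=
      anchors_of_forall_ne fun e' he' h => hL.snd_notMem_s4 e' he' (h ▸ Set.mem_insert _ _)
    have hA : ∀ q ∈ Φ, ∃ x, A' (f x) = some q := fun q hq => by
      obtain ⟨x, hx⟩ := hΦ q hq
      have hxw : f x ≠ w := fun h => hforce.2.1 (h ▸ hI.mem_of_anchor _ q hx)
      exact ⟨x, (anchorStep_of_ne hxw).trans hx⟩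
    rw [List.filterMap_cons]
    rcases hq : pulledForce f (anchors f A' L) (u, w) with _ | ⟨p, v⟩
    · have hC : f ⁻¹' {w} ⊆ C := fun v hv => Option.eq_none_iff_forall_ne_some.2 fun p hp => by
        rw [(pulledForce_eq_some (A := anchors f A' L) (e := (u, w)) hf).2 ⟨hv, hv ▸ hp⟩] at hq
        cases hq
      have hblue : C ∪ f ⁻¹' insert w S = C ∪ f ⁻¹' S := by
        rw [Set.insert_eq, Set.preimage_union, ← Set.union_assoc, Set.union_eq_left.2 hC]
      rw [← hblue]
      exact ih hL (hI.step hf hforce) hA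
    · obtain ⟨hv, hp⟩ := (pulledForce_eq_some hf).1 hq
      change f v = w at hv
      subst hv
      rw [hfin] at hp
      have hvC : v ∉ C := by simp [C, hfin, hp]
      have hblue : C ∪ f ⁻¹' insert (f v) S = insert v (C ∪ f ⁻¹' S) := by
        rw [Set.insert_eq, Set.preimage_union, ← Set.image_singleton, hf.preimage_image,
          Set.union_left_comm, ← Set.insert_eq]
      refine ⟨zfForceValid_of_anchorStep f hf hI hΦ hforce rfl hvC hp, ?_⟩
      have hA' : ∀ q ∈ insert p Φ, ∃ x, A' (f x) = some q := by
        rintro q (rfl | hq)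
        exacts [⟨v, hp⟩, hA q hq]
      rw [← hblue]
      exact ih hL (hI.step hf hforce) hA'

end Pullback

section Simulation

variable {W : Type*} {G : SimpleGraph V} {H : SimpleGraph W}

theorem anchors_saturated_zfBlueAt {f : V → W} (hf : Injective f) {B : Set W}
    {L : List (W × W)} (hL : zfValidList H B ∅ L) {t : ℕ} {x : W} {p : V}
    (hx : x ∈ zfBlueAt H {e | e ∈ L} B t) (hp : anchors f (fun _ => none) L x = some p) :
    f p ∈ zfBlueAt H {e | e ∈ L} B t ∧ ∀ y, H.Adj (f p) y → y ∈ zfBlueAt H {e | e ∈ L} B t := by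
  induction t using Nat.strong_induction_on generalizing x with
  | _ t ih =>
    have hxB : x ∉ B := fun hxB => by
      rw [anchors_of_forall_ne fun e he h => hL.snd_notMem_s4 e he (h ▸ hxB)] at hp
      cases hp
    obtain ⟨s, hst, u, hux, hu, -, hcond⟩ := exists_force_of_mem_zfBlueAt hx hxB
    have hmono := zfBlueAt_mono (X := H) (F := {e | e ∈ L}) (B := B) hst.le
    rw [anchors_eq_of_mem hL hux, partialInv_or_eq_some hf] at hp
    rcases hp with rfl | ⟨-, hup⟩
    · exact ⟨hmono hu, fun y hy => (hcond.mem_insert hy).elim (· ▸ hx) (hmono ·)⟩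
    · obtain ⟨hpblue, hpsat⟩ := ih s hst hu hup
      exact ⟨hmono hpblue, fun y hy => hmono (hpsat y hy)⟩

theorem preimage_zfBlueAt_subset (f : G →g H) (hf : Injective f) {B : Set W}
    {L : List (W × W)} (hL : zfValidList H B ∅ L) {F' : Set (V × V)}
    (hpull : ∀ q ∈ L.filterMap (pulledForce f (anchors f (fun _ => none) L)), q ∈ F')
    (hfun : ∀ p v v', (p, v) ∈ F' → (p, v') ∈ F' → v = v') (t : ℕ) :
    f ⁻¹' zfBlueAt H {e | e ∈ L} B t ⊆
      zfBlueAt G F' {v | anchors f (fun _ => none) L (f v) = none} t := by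
  induction t with
  | zero => exact fun v hv => anchors_of_forall_ne fun e he h => hL.snd_notMem_s4 e he (h ▸ hv)
  | succ t ih =>
    rintro v (hv | ⟨u, huv, hu, -, -, hcond⟩)
    · exact zfBlueAt_mono t.le_succ (ih hv)
    · cases hA : anchors f (fun _ => none) L (f v) with
      | none => exact zfBlueAt_mono (Nat.zero_le _) hA
      | some p =>
        have hpv : (p, v) ∈ F' := hpull _ (List.mem_filterMap.2
          ⟨(u, f v), huv, (pulledForce_eq_some hf).2 ⟨rfl, hA⟩⟩)
        refine mem_zfBlueAt_succ (fun v' hv' => hfun p v' v hv' hpv) hpv ?_ ?_ <;>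
          rw [anchors_eq_of_mem hL huv, partialInv_or_eq_some hf] at hA <;>
          rcases hA with rfl | ⟨-, hup⟩
        · exact ih hu
        · exact ih (anchors_saturated_zfBlueAt hf hL hu hup).1
        · exact ForcingCondition.comap f hf hcond fun x hx => ih hx
        · exact Or.inr fun x hx => ih ((anchors_saturated_zfBlueAt hf hL hu hup).2 _ (f.map_adj hx))

theorem thZFgraph_le_of_zfBlueAt_eq_univ [Finite W] (f : G →g H) (hf : Injective f) {B : Set W}
    {F : Set (W × W)} {T : ℕ} (hF : IsZFForceSet H B F) (hT : zfBlueAt H F B T = Set.univ) :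
    thZFgraph G ≤ B.ncard + T := by
  have : Finite V := Finite.of_injective f hf
  obtain ⟨L, hL, -, rfl⟩ := hF
  set B' := {v | anchors f (fun _ => none) L (f v) = none}
  have hB' : B' ∪ f ⁻¹' B = B' := Set.union_eq_left.2 fun v hv =>
    anchors_of_forall_ne fun e he h => hL.snd_notMem_s4 e he (h ▸ hv)
  have hvalid := zfValidList_filterMap_pulledForce f hf hL (AnchorInv.init B) (Φ := ∅) (by simp)
  change zfValidList G (B' ∪ f ⁻¹' B) _ _ at hvalid
  rw [hB'] at hvalid
  obtain ⟨F', hF', hpull, hfun⟩ := exists_isZFForceSet_of_zfValidList hvalid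
  have hcover : zfBlueAt G F' B' T = Set.univ := Set.eq_univ_of_forall fun v =>
    preimage_zfBlueAt_subset f hf hL hpull hfun T (by simp [hT])
  have hcard : B'.ncard ≤ B.ncard := ncard_preimage_unanchored_le hf hL
    (Set.eq_univ_of_univ_subset (hT ▸ zfBlueAt_subset T))
  calc thZFgraph G ≤ thZF G B' := sInf_le ⟨B', rfl⟩
    _ ≤ B'.ncard + T := add_le_add_right (ptZF_le hF' hcover) _
    _ ≤ B.ncard + T := by gcongr

end Simulation

theorem stmt4_general {V W : Type*} [Fintype W] (G : SimpleGraph V) (H : SimpleGraph W)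
    (f : G →g H) (hf : Function.Injective f) :
    thZFgraph G ≤ thZFgraph H := by
  refine le_sInf ?_
  rintro _ ⟨B, rfl⟩
  rw [thZF, ptZF, ENat.add_sInf]
  refine le_iInf₂ ?_
  rintro _ ⟨F, hF, rfl⟩
  rw [ptZFofF, ENat.add_sInf]
  refine le_iInf₂ ?_
  rintro _ ⟨T, rfl, hT⟩
  exact thZFgraph_le_of_zfBlueAt_eq_univ f hf hF hT

/-- the `⌊Z⌋` throttling number is subgraph monotone. -/
theorem stmt4 {V W : Type*} [Fintype V] [Fintype W] (G : SimpleGraph V) (H : SimpleGraph W)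
    (f : G →g H) (hf : Function.Injective f) :
    thZFgraph G ≤ thZFgraph H :=
  stmt4_general G H f hf

end ZFT
end

section
/- For each fixed positive integer t, there are, up to isomorphism, only finitely many finite simple graphs G with th_Z(G) = t. -/
open SimpleGraph

namespace ZFT

variable {V : Type*} {α : Type*} {β : Type*}

/-!
Each round of simultaneous forcing at most doubles the blue set, since every blue vertex
forces at most one vertex. Hence if `|B| + pt_Z(G;B) ≤ t`, then `G` has at most
`2 ^ pt_Z(G;B) * |B| ≤ 2 ^ t * t` vertices, and there are only finitely many graphs on
boundedly many labelled vertices.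
-/

lemma ncard_zStep_le [Finite V] (G : SimpleGraph V) (S : Set V) :
    (zStep G S).ncard ≤ 2 * S.ncard := by
  have forced_unique : ∀ u, ∃ w', ∀ w, w ∉ S → G.Adj u w →
      (∀ x, G.Adj u x → x ∉ S → x = w) → w = w' := by
    intro u
    by_cases h : ∃ w, w ∉ S ∧ G.Adj u w ∧ ∀ x, G.Adj u x → x ∉ S → x = w
    · obtain ⟨w', hw'S, hw'adj, -⟩ := h
      exact ⟨w', fun w _ _ huniq => (huniq w' hw'adj hw'S).symm⟩
    · exact ⟨u, fun w hwS hadj huniq => (h ⟨w, hwS, hadj, huniq⟩).elim⟩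
  choose g hg using forced_unique
  have hsub : zStep G S ⊆ S ∪ g '' S := by
    rintro w (hw | ⟨u, hu, hadj, huniq⟩)
    · exact Or.inl hw
    by_cases hwS : w ∈ S
    · exact Or.inl hwS
    · exact Or.inr ⟨u, hu, (hg u w hwS hadj huniq).symm⟩
  calc (zStep G S).ncard ≤ (S ∪ g '' S).ncard := Set.ncard_le_ncard hsub
    _ ≤ S.ncard + (g '' S).ncard := Set.ncard_union_le _ _
    _ ≤ 2 * S.ncard := by linarith [Set.ncard_image_le (f := g) S.toFinite]

lemma ncard_iterate_zStep_le [Finite V] (G : SimpleGraph V) (B : Set V) (p : ℕ) :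
    ((zStep G)^[p] B).ncard ≤ 2 ^ p * B.ncard := by
  induction p with
  | zero => simp
  | succ p ih =>
    rw [Function.iterate_succ_apply', pow_succ, mul_comm _ 2, mul_assoc]
    exact (ncard_zStep_le G _).trans (Nat.mul_le_mul_left 2 ih)

lemma ENat.exists_mem_le_of_sInf_le {s : Set ℕ∞} {k : ℕ} (h : sInf s ≤ k) :
    ∃ a ∈ s, a ≤ k :=
  ⟨sInf s, csInf_mem (Set.nonempty_iff_ne_empty.2 fun hs => by simp [hs] at h), h⟩

lemma exists_iterate_zStep_eq_univ_of_ptZ_le {G : SimpleGraph V} {B : Set V} {k : ℕ}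
    (h : ptZ G B ≤ k) : ∃ p ≤ k, (zStep G)^[p] B = Set.univ := by
  obtain ⟨_, ⟨p, rfl, hp⟩, hpk⟩ := ENat.exists_mem_le_of_sInf_le h
  exact ⟨p, by exact_mod_cast hpk, hp⟩

lemma exists_iterate_zStep_eq_univ_of_thZgraph_le {G : SimpleGraph V} {t : ℕ}
    (h : thZgraph G ≤ t) : ∃ B : Set V, ∃ p, B.ncard + p ≤ t ∧ (zStep G)^[p] B = Set.univ := by
  obtain ⟨_, ⟨B, -, rfl⟩, hB⟩ := ENat.exists_mem_le_of_sInf_le h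
  have hcard : B.ncard ≤ t := by exact_mod_cast le_of_add_le_left hB
  have hpt : ptZ G B ≤ (t - B.ncard : ℕ) := by
    rw [ENat.natCast_sub]
    exact ENat.le_sub_of_add_le_left (ENat.natCast_ne_top _) hB
  obtain ⟨p, hp, hBp⟩ := exists_iterate_zStep_eq_univ_of_ptZ_le hpt
  exact ⟨B, p, by omega, hBp⟩

lemma card_le_of_thZgraph_le [Finite V] {G : SimpleGraph V} {t : ℕ} (h : thZgraph G ≤ t) :
    Nat.card V ≤ 2 ^ t * t := by
  obtain ⟨B, p, hle, hBp⟩ := exists_iterate_zStep_eq_univ_of_thZgraph_le h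
  calc Nat.card V = ((zStep G)^[p] B).ncard := by rw [hBp, Set.ncard_univ]
    _ ≤ 2 ^ p * B.ncard := ncard_iterate_zStep_le G B p
    _ ≤ 2 ^ t * t := Nat.mul_le_mul (Nat.pow_le_pow_right two_pos (by omega)) (by omega)

lemma finite_setOf_fst_le (N : ℕ) :
    {p : (n : ℕ) × SimpleGraph (Fin n) | p.1 ≤ N}.Finite := by
  refine ((Set.finite_Iic N).biUnion fun n _ => (Set.finite_univ.image (Sigma.mk n))).subset ?_
  rintro ⟨n, G⟩ hn
  exact Set.mem_biUnion hn ⟨G, trivial, rfl⟩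

theorem stmt13_general (t : ℕ) :
    {p : (n : ℕ) × SimpleGraph (Fin n) | thZgraph p.2 = (t : ℕ∞)}.Finite :=
  (finite_setOf_fst_le (2 ^ t * t)).subset fun ⟨n, G⟩ hG => by
    simpa using card_le_of_thZgraph_le (le_of_eq hG)

/-- for each fixed `t ≥ 1` there are, up to isomorphism, only finitely
many graphs with standard throttling number `t`. -/
theorem stmt13 (t : ℕ) (ht : 0 < t) :
    {p : (n : ℕ) × SimpleGraph (Fin n) | thZgraph p.2 = (t : ℕ∞)}.Finite :=
  stmt13_general t

end ZFT
end
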